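/- Let λ₁,λ₂,λ₃,λ₄ ∈ ℝ and let 𝔤 be the 4-dimensional real Lie algebra with orthonormal basis X₁,X₂,X₃,X₄ (inner product g) and brackets [X₁,X₂] = −[X₃,X₄] = λ₁X₁ + λ₂X₂ + λ₃X₃ + λ₄X₄, [X₁,X₃] = [X₂,X₄] = λ₄X₁ − λ₃X₂ + λ₂X₃ − λ₁X₄, [X₂,X₃] = [X₁,X₄] = 0. Define ∇ by 2g(∇ₓy,z) = g([x,y],z) + g([z,x],y) + g([z,y],x) and R(x,y,z,w) = g(∇ₓ∇_y z − ∇_y∇ₓ z − ∇_{[x,y]} z, w). Set ρ(y,z) = Σᵢ R(Xᵢ,y,z,Xᵢ), τ = Σⱼ ρ(Xⱼ,Xⱼ), π₁(x,y,z,w) = g(y,z)g(x,w) − g(x,z)g(y,w), and ψ₁(ρ)(x,y,z,w) = g(y,z)ρ(x,w) − g(x,z)ρ(y,w) + ρ(y,z)g(x,w) − ρ(x,z)g(y,w). Then the Weyl tensor W = R − (1/2){ψ₁(ρ) − (τ/3)π₁} is identically zero; i.e. the example manifold is conformally flat with respect to the Levi-Civita connection. -/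

import Mathlib

/-!
The structure equations say `[x, y] = ω₁(x, y) A + ω₂(x, y) B` for two 2-forms `ω₁, ω₂` and
`A = λ₁X₁ + λ₂X₂ + λ₃X₃ + λ₄X₄`, `B = λ₄X₁ − λ₃X₂ + λ₂X₃ − λ₁X₄`. Solving the Koszul formula
and computing in coordinates gives `R = −|λ|² π₁ + ψ₁(c ⊗ c)` with `c = ⟪C, ·⟫`,
`C = λ₃X₁ + λ₄X₂ − λ₁X₃ − λ₂X₄`: the curvature tensor of `H³(−|λ|²) × ℝ`, with `C` the flat
direction. In dimension `n`, a tensor `R = a π₁ + ψ₁(h)` has Ricci tensor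
`((n − 1) a + tr h) g + (n − 2) h`, hence `ψ₁(ρ) − τ/(n − 1) π₁ = (n − 2) R`, i.e. its Weyl
tensor vanishes.
-/

open scoped RealInnerProductSpace

noncomputable section

section CurvatureTensor

variable {E : Type*} [NormedAddCommGroup E] [InnerProductSpace ℝ E]

def pi₁ (x y z w : E) : ℝ := ⟪y, z⟫ * ⟪x, w⟫ - ⟪x, z⟫ * ⟪y, w⟫

def psi₁ (h : E → E → ℝ) (x y z w : E) : ℝ :=
  ⟪y, z⟫ * h x w - ⟪x, z⟫ * h y w + h y z * ⟪x, w⟫ - h x z * ⟪y, w⟫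

variable {ι : Type*} [Fintype ι]

def ricci (b : OrthonormalBasis ι ℝ E) (R : E → E → E → E → ℝ) (y z : E) : ℝ :=
  ∑ i, R (b i) y z (b i)

def scalarCurvature (b : OrthonormalBasis ι ℝ E) (R : E → E → E → E → ℝ) : ℝ :=
  ∑ j, ricci b R (b j) (b j)

theorem OrthonormalBasis.sum_apply_left_mul_inner (b : OrthonormalBasis ι ℝ E)
    (h : E →ₗ[ℝ] E →ₗ[ℝ] ℝ) (y z : E) : ∑ i, h (b i) z * ⟪y, b i⟫ = h y z := by
  conv_rhs => rw [← b.sum_repr' y]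
  simp [real_inner_comm, mul_comm]

theorem OrthonormalBasis.sum_inner_mul_apply_right (b : OrthonormalBasis ι ℝ E)
    (h : E →ₗ[ℝ] E →ₗ[ℝ] ℝ) (y z : E) : ∑ i, ⟪b i, z⟫ * h y (b i) = h y z := by
  conv_rhs => rw [← b.sum_repr' z]
  simp

section

variable (b : OrthonormalBasis ι ℝ E) (a : ℝ) (h : E →ₗ[ℝ] E →ₗ[ℝ] ℝ) {R : E → E → E → E → ℝ}

theorem ricci_eq_of_eq_smul_pi₁_add_psi₁
    (hR : ∀ x y z w, R x y z w = a * pi₁ x y z w + psi₁ (fun u v ↦ h u v) x y z w) (y z : E) :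
    ricci b R y z = ((Fintype.card ι - 1) * a + ∑ i, h (b i) (b i)) * ⟪y, z⟫
      + (Fintype.card ι - 2) * h y z := by
  have hg : ∑ i, ⟪b i, z⟫ * ⟪y, b i⟫ = ⟪y, z⟫ := by
    simpa [mul_comm] using b.sum_inner_mul_inner y z
  simp only [ricci, hR, pi₁, psi₁, Finset.sum_add_distrib, Finset.sum_sub_distrib,
    ← Finset.mul_sum, b.inner_eq_one, hg, b.sum_apply_left_mul_inner, b.sum_inner_mul_apply_right,
    Finset.sum_const, Finset.card_univ, nsmul_eq_mul, mul_one]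
  ring

theorem scalarCurvature_eq_of_eq_smul_pi₁_add_psi₁
    (hR : ∀ x y z w, R x y z w = a * pi₁ x y z w + psi₁ (fun u v ↦ h u v) x y z w) :
    scalarCurvature b R = Fintype.card ι * (Fintype.card ι - 1) * a
      + 2 * (Fintype.card ι - 1) * ∑ i, h (b i) (b i) := by
  simp only [scalarCurvature, ricci_eq_of_eq_smul_pi₁_add_psi₁ b a h hR, b.inner_eq_one,
    Finset.sum_add_distrib, ← Finset.mul_sum, Finset.sum_const, Finset.card_univ, nsmul_eq_mul]
  ring

theorem psi₁_ricci_sub_scalarCurvature_smul_pi₁ (hn : Fintype.card ι ≠ 1)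
    (hR : ∀ x y z w, R x y z w = a * pi₁ x y z w + psi₁ (fun u v ↦ h u v) x y z w)
    (x y z w : E) :
    psi₁ (ricci b R) x y z w - scalarCurvature b R / (Fintype.card ι - 1) * pi₁ x y z w
      = (Fintype.card ι - 2) * R x y z w := by
  have hn' : (Fintype.card ι : ℝ) - 1 ≠ 0 := sub_ne_zero.2 (mod_cast hn)
  simp only [psi₁, ricci_eq_of_eq_smul_pi₁_add_psi₁ b a h hR,
    scalarCurvature_eq_of_eq_smul_pi₁_add_psi₁ b a h hR, hR, pi₁]
  field_simp
  ring

end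

theorem nabla_eq_of_koszul (bracket : E → E → E) (J₁ J₂ : E → E) (A B : E)
    (hbracket : ∀ x y, bracket x y = ⟪x, J₁ y⟫ • A + ⟪x, J₂ y⟫ • B) (nabla : E → E → E)
    (hKoszul : ∀ x y z,
      2 * ⟪nabla x y, z⟫ = ⟪bracket x y, z⟫ + ⟪bracket z x, y⟫ + ⟪bracket z y, x⟫)
    (x y : E) :
    nabla x y = (1 / 2 : ℝ) •
      (bracket x y + ⟪A, y⟫ • J₁ x + ⟪B, y⟫ • J₂ x + ⟪A, x⟫ • J₁ y + ⟪B, x⟫ • J₂ y) := by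
  refine ext_inner_right ℝ fun z ↦ ?_
  have := hKoszul x y z
  simp only [hbracket, inner_add_left, inner_add_right, real_inner_smul_left,
    real_inner_smul_right, real_inner_comm z] at this ⊢
  linarith

end CurvatureTensor

namespace ExampleManifold

local notation "E₄" => EuclideanSpace ℝ (Fin 4)
local notation "e" i => EuclideanSpace.single (i : Fin 4) (1 : ℝ)

def vecA (l1 l2 l3 l4 : ℝ) : E₄ := l1 • (e 0) + l2 • (e 1) + l3 • (e 2) + l4 • (e 3)

def vecB (l1 l2 l3 l4 : ℝ) : E₄ := l4 • (e 0) - l3 • (e 1) + l2 • (e 2) - l1 • (e 3)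

def vecC (l1 l2 l3 l4 : ℝ) : E₄ := l3 • (e 0) + l4 • (e 1) - l1 • (e 2) - l2 • (e 3)

-- `⟪x, J₁ y⟫ = (e¹∧e² − e³∧e⁴)(x, y)` and `⟪x, J₂ y⟫ = (e¹∧e³ + e²∧e⁴)(x, y)`
def J₁ (x : E₄) : E₄ := !₂[x 1, -x 0, -x 3, x 2]

def J₂ (x : E₄) : E₄ := !₂[x 2, x 3, -x 0, -x 1]

theorem inner_eq (x y : E₄) : ⟪x, y⟫ = x 0 * y 0 + x 1 * y 1 + x 2 * y 2 + x 3 * y 3 := by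
  simp [PiLp.inner_apply, Fin.sum_univ_four, mul_comm]

theorem eq_sum_smul_single (x : E₄) :
    x = x 0 • (e 0) + x 1 • (e 1) + x 2 • (e 2) + x 3 • (e 3) := by
  ext k
  fin_cases k <;> simp

theorem bracket_eq {l1 l2 l3 l4 : ℝ} (bracket : E₄ →ₗ[ℝ] E₄ →ₗ[ℝ] E₄)
    (hskew : ∀ x y, bracket x y = -bracket y x)
    (h12 : bracket (e 0) (e 1) = vecA l1 l2 l3 l4)
    (h34 : bracket (e 2) (e 3) = -vecA l1 l2 l3 l4)
    (h13 : bracket (e 0) (e 2) = vecB l1 l2 l3 l4)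
    (h24 : bracket (e 1) (e 3) = vecB l1 l2 l3 l4)
    (h23 : bracket (e 1) (e 2) = 0) (h14 : bracket (e 0) (e 3) = 0) (x y : E₄) :
    bracket x y = ⟪x, J₁ y⟫ • vecA l1 l2 l3 l4 + ⟪x, J₂ y⟫ • vecB l1 l2 l3 l4 := by
  have hdiag (v : E₄) : bracket v v = 0 := by
    have := hskew v v
    rw [eq_neg_iff_add_eq_zero, ← two_smul ℝ] at this
    simpa using this
  have hswap (i j : Fin 4) : bracket (e j) (e i) = -bracket (e i) (e j) := hskew _ _
  conv_lhs => rw [eq_sum_smul_single x, eq_sum_smul_single y]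
  simp only [map_add, map_smul, LinearMap.add_apply, LinearMap.smul_apply, hdiag,
    hswap 0 1, hswap 0 2, hswap 0 3, hswap 1 2, hswap 1 3, hswap 2 3,
    h12, h13, h14, h23, h24, h34, inner_eq, J₁, J₂, Matrix.cons_val]
  module

theorem curvature_eq {l1 l2 l3 l4 : ℝ} (bracket : E₄ → E₄ → E₄)
    (hbracket : ∀ x y, bracket x y = ⟪x, J₁ y⟫ • vecA l1 l2 l3 l4 + ⟪x, J₂ y⟫ • vecB l1 l2 l3 l4)
    (nabla : E₄ → E₄ → E₄)
    (hnabla : ∀ x y, nabla x y = (1 / 2 : ℝ) • (bracket x y + ⟪vecA l1 l2 l3 l4, y⟫ • J₁ x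
      + ⟪vecB l1 l2 l3 l4, y⟫ • J₂ x + ⟪vecA l1 l2 l3 l4, x⟫ • J₁ y + ⟪vecB l1 l2 l3 l4, x⟫ • J₂ y))
    (R : E₄ → E₄ → E₄ → E₄ → ℝ)
    (hR : ∀ x y z w,
      R x y z w = ⟪nabla x (nabla y z) - nabla y (nabla x z) - nabla (bracket x y) z, w⟫)
    (x y z w : E₄) :
    R x y z w = -(l1 ^ 2 + l2 ^ 2 + l3 ^ 2 + l4 ^ 2) * pi₁ x y z w
      + psi₁ (fun u v ↦ ⟪vecC l1 l2 l3 l4, u⟫ * ⟪vecC l1 l2 l3 l4, v⟫) x y z w := by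
  simp only [hR, hnabla, hbracket, pi₁, psi₁, inner_eq]
  simp only [J₁, J₂, vecA, vecB, vecC, Matrix.cons_val, PiLp.add_apply, PiLp.sub_apply,
    PiLp.smul_apply, PiLp.single_apply, smul_eq_mul, Fin.reduceEq, ↓reduceIte]
  ring

end ExampleManifold

end

theorem statement_15_general
    (l1 l2 l3 l4 : ℝ)
    (X : Fin 4 → EuclideanSpace ℝ (Fin 4))
    (hX : ∀ i, X i = EuclideanSpace.single i 1)
    (bracket : EuclideanSpace ℝ (Fin 4) →ₗ[ℝ] EuclideanSpace ℝ (Fin 4) →ₗ[ℝ] EuclideanSpace ℝ (Fin 4))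
    (hskew : ∀ x y, bracket x y = - bracket y x)
    (h12 : bracket (X 0) (X 1) = l1 • X 0 + l2 • X 1 + l3 • X 2 + l4 • X 3)
    (h34 : bracket (X 2) (X 3) = -(l1 • X 0 + l2 • X 1 + l3 • X 2 + l4 • X 3))
    (h13 : bracket (X 0) (X 2) = l4 • X 0 - l3 • X 1 + l2 • X 2 - l1 • X 3)
    (h24 : bracket (X 1) (X 3) = l4 • X 0 - l3 • X 1 + l2 • X 2 - l1 • X 3)
    (h23 : bracket (X 1) (X 2) = 0)
    (h14 : bracket (X 0) (X 3) = 0)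
    (nabla : EuclideanSpace ℝ (Fin 4) → EuclideanSpace ℝ (Fin 4) → EuclideanSpace ℝ (Fin 4))
    (hKoszul : ∀ x y z, 2 * ⟪nabla x y, z⟫
      = ⟪bracket x y, z⟫ + ⟪bracket z x, y⟫ + ⟪bracket z y, x⟫)
    (R : EuclideanSpace ℝ (Fin 4) → EuclideanSpace ℝ (Fin 4) → EuclideanSpace ℝ (Fin 4) → EuclideanSpace ℝ (Fin 4) → ℝ)
    (hR : ∀ x y z w,
      R x y z w = ⟪nabla x (nabla y z) - nabla y (nabla x z) - nabla (bracket x y) z, w⟫) :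
    ∀ x y z w,
      R x y z w - (1 / 2) *
        ((⟪y, z⟫ * (∑ i, R (X i) x w (X i)) - ⟪x, z⟫ * (∑ i, R (X i) y w (X i))
            + (∑ i, R (X i) y z (X i)) * ⟪x, w⟫ - (∑ i, R (X i) x z (X i)) * ⟪y, w⟫)
          - ((∑ j, ∑ i, R (X i) (X j) (X j) (X i)) / 3) * (⟪y, z⟫ * ⟪x, w⟫ - ⟪x, z⟫ * ⟪y, w⟫)) = 0 := by
  obtain rfl : X = fun i ↦ EuclideanSpace.single i 1 := funext hX
  have hbracket := ExampleManifold.bracket_eq bracket hskew h12 h34 h13 h24 h23 h14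
  have hnabla := nabla_eq_of_koszul _ _ _ _ _ hbracket nabla hKoszul
  have hcurv := ExampleManifold.curvature_eq (fun x y ↦ bracket x y) hbracket nabla hnabla R hR
  let c := innerₗ (EuclideanSpace ℝ (Fin 4)) (ExampleManifold.vecC l1 l2 l3 l4)
  intro x y z w
  have hweyl := psi₁_ricci_sub_scalarCurvature_smul_pi₁ (EuclideanSpace.basisFun (Fin 4) ℝ) _
    ((LinearMap.mul ℝ ℝ).compl₁₂ c c) (by simp) (by simpa [c] using hcurv) x y z w
  simp only [psi₁, pi₁, ricci, scalarCurvature, EuclideanSpace.basisFun_apply,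
    Fintype.card_fin] at hweyl
  linarith

/-- The example manifold of the paper is conformally flat with respect
to the Levi-Civita connection: its Weyl tensor `W = R − (1/2){ψ₁(ρ) − (τ/3)π₁}`
vanishes identically. -/
theorem statement_15
    (l1 l2 l3 l4 : ℝ)
    (X : Fin 4 → EuclideanSpace ℝ (Fin 4))
    (hX : ∀ i, X i = EuclideanSpace.single i 1)
    (bracket : EuclideanSpace ℝ (Fin 4) →ₗ[ℝ] EuclideanSpace ℝ (Fin 4) →ₗ[ℝ] EuclideanSpace ℝ (Fin 4))
    (hskew : ∀ x y, bracket x y = - bracket y x)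
    (hjacobi : ∀ x y z,
      bracket (bracket x y) z + bracket (bracket y z) x + bracket (bracket z x) y = 0)
    (h12 : bracket (X 0) (X 1) = l1 • X 0 + l2 • X 1 + l3 • X 2 + l4 • X 3)
    (h34 : bracket (X 2) (X 3) = -(l1 • X 0 + l2 • X 1 + l3 • X 2 + l4 • X 3))
    (h13 : bracket (X 0) (X 2) = l4 • X 0 - l3 • X 1 + l2 • X 2 - l1 • X 3)
    (h24 : bracket (X 1) (X 3) = l4 • X 0 - l3 • X 1 + l2 • X 2 - l1 • X 3)
    (h23 : bracket (X 1) (X 2) = 0)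
    (h14 : bracket (X 0) (X 3) = 0)
    (nabla : EuclideanSpace ℝ (Fin 4) → EuclideanSpace ℝ (Fin 4) → EuclideanSpace ℝ (Fin 4))
    (hKoszul : ∀ x y z, 2 * ⟪nabla x y, z⟫
      = ⟪bracket x y, z⟫ + ⟪bracket z x, y⟫ + ⟪bracket z y, x⟫)
    (R : EuclideanSpace ℝ (Fin 4) → EuclideanSpace ℝ (Fin 4) → EuclideanSpace ℝ (Fin 4) → EuclideanSpace ℝ (Fin 4) → ℝ)
    (hR : ∀ x y z w,
      R x y z w = ⟪nabla x (nabla y z) - nabla y (nabla x z) - nabla (bracket x y) z, w⟫) :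
    ∀ x y z w,
      R x y z w - (1 / 2) *
        ((⟪y, z⟫ * (∑ i, R (X i) x w (X i)) - ⟪x, z⟫ * (∑ i, R (X i) y w (X i))
            + (∑ i, R (X i) y z (X i)) * ⟪x, w⟫ - (∑ i, R (X i) x z (X i)) * ⟪y, w⟫)
          - ((∑ j, ∑ i, R (X i) (X j) (X j) (X i)) / 3) * (⟪y, z⟫ * ⟪x, w⟫ - ⟪x, z⟫ * ⟪y, w⟫)) = 0 :=
  statement_15_general l1 l2 l3 l4 X hX bracket hskew h12 h34 h13 h24 h23 h14 nabla hKoszul R hR
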